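/- Let T be a bidirected tree rooted at a vertex z, let r be a unimodal request and r' a diverging request in T. Then r and r' do not interfere if and only if m_r is an ancestor of s_{r'} and s_r and t_{r'} are related. -/

import Mathlib

open SimpleGraph

/-- A request in a bidirected tree `T`: a directed path of length at least 1,
encoded as a path (walk without vertex repetition) in the underlying tree. -/
structure Request {V : Type*} (T : SimpleGraph V) where
  s : V
  t : V
  toWalk : T.Walk s t
  isPath : toWalk.IsPath
  one_le_length : 1 ≤ toWalk.length

namespace Request

variable {V : Type*} {T : SimpleGraph V}

/-- The second vertex `s_r⁺` of a request. -/
def sPlus (r : Request T) : V := r.toWalk.getVert 1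

/-- The penultimate vertex `t_r⁻` of a request. -/
def tMinus (r : Request T) : V := r.toWalk.getVert (r.toWalk.length - 1)

end Request

variable {V : Type*}

/-- `r` interferes on `r'` if the unique path from `s_r` to `t_{r'}` in the tree `T`
has first arc the emission arc of `r` and last arc the reception arc of `r'`. -/
def InterferesOn (T : SimpleGraph V) (r r' : Request T) : Prop :=
  ∃ p : T.Walk r.s r'.t, p.IsPath ∧ 1 ≤ p.length ∧
    p.getVert 1 = r.sPlus ∧ p.getVert (p.length - 1) = r'.tMinus

/-- Two requests interfere if one of them interferes on the other. -/
def Interfere (T : SimpleGraph V) (r r' : Request T) : Prop :=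
  InterferesOn T r r' ∨ InterferesOn T r' r

/-- `x` is an ancestor of `y` in the tree `T` rooted at `z`:
`x` lies on the unique path from `z` to `y`. -/
def Ancestor (T : SimpleGraph V) (z x y : V) : Prop :=
  ∃ p : T.Walk z y, p.IsPath ∧ x ∈ p.support

/-- Two vertices are related if one is an ancestor of the other. -/
def Related (T : SimpleGraph V) (z x y : V) : Prop :=
  Ancestor T z x y ∨ Ancestor T z y x

/-- A request is converging (w.r.t. root `z`) if all its arcs are directed towards `z`,
i.e. the head of every arc is an ancestor of its tail. -/
def Converging (T : SimpleGraph V) (z : V) (r : Request T) : Prop :=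
  ∀ i < r.toWalk.length, Ancestor T z (r.toWalk.getVert (i+1)) (r.toWalk.getVert i)

/-- A request is diverging (w.r.t. root `z`) if all its arcs are directed away from `z`,
i.e. the tail of every arc is an ancestor of its head. -/
def Diverging (T : SimpleGraph V) (z : V) (r : Request T) : Prop :=
  ∀ i < r.toWalk.length, Ancestor T z (r.toWalk.getVert i) (r.toWalk.getVert (i+1))

/-- A request is unimodal (w.r.t. root `z`) if it is neither converging nor diverging. -/
def Unimodal (T : SimpleGraph V) (z : V) (r : Request T) : Prop :=
  ¬ Converging T z r ∧ ¬ Diverging T z r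

/-- `m` is the middle of the request `r` (w.r.t. root `z`): the vertex of `r`
closest to the root, i.e. the vertex of `r` which is an ancestor of every vertex of `r`. -/
def IsMiddle (T : SimpleGraph V) (z : V) (r : Request T) (m : V) : Prop :=
  m ∈ r.toWalk.support ∧ ∀ y ∈ r.toWalk.support, Ancestor T z m y

/-- The interference graph of a family of requests: two (indices of) requests are
adjacent iff they are distinct and the requests interfere. -/
def interferenceGraph (T : SimpleGraph V) {ι : Type*} (f : ι → Request T) :
    SimpleGraph ι where
  Adj i j := i ≠ j ∧ Interfere T (f i) (f j)
  symm := by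
    constructor
    intro i j h
    exact ⟨h.1.symm, h.2.symm⟩
  loopless := by
    constructor
    intro i h
    exact h.1 rfl

/-- The interference graph of a set of requests. -/
def interGraph (T : SimpleGraph V) (R : Set (Request T)) : SimpleGraph ↥R :=
  interferenceGraph T (fun r => (r : Request T))

/-- The pair `(a, b)` is an arc joining two consecutive vertices of the
bidirected path corresponding to the walk `p` (in either direction). -/
def ArcOn (T : SimpleGraph V) {u v : V} (p : T.Walk u v) (a b : V) : Prop :=
  ∃ j < p.length, (p.getVert j = a ∧ p.getVert (j+1) = b) ∨
    (p.getVert j = b ∧ p.getVert (j+1) = a)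

/-- The request `r` shares an arc with the bidirected path corresponding to
the walk `p`. -/
def SharesArc (T : SimpleGraph V) {u v : V} (p : T.Walk u v) (r : Request T) : Prop :=
  ∃ i < r.toWalk.length, ArcOn T p (r.toWalk.getVert i) (r.toWalk.getVert (i+1))

/-- A leaf of a tree: a vertex with at most one neighbour. -/
def IsLeaf (T : SimpleGraph V) (y : V) : Prop :=
  {w | T.Adj y w}.Subsingleton

/-- A comparability graph: there is a partial order on the vertices such that
two distinct vertices are adjacent iff they are comparable. -/
def IsComparabilityGraph {α : Type*} (G : SimpleGraph α) : Prop :=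
  ∃ le : α → α → Prop, IsPartialOrder α le ∧ ∀ a b, G.Adj a b ↔ a ≠ b ∧ (le a b ∨ le b a)

/-- A cobipartite graph: the vertex set can be partitioned into two cliques. -/
def IsCobipartite {α : Type*} (G : SimpleGraph α) : Prop :=
  ∃ A : Set α, G.IsClique A ∧ G.IsClique Aᶜ

/-!
In a tree rooted at `z`, the ancestor relation is a partial order whose principal down-sets are
chains, and the unique path from `a` to `b` is read off from this order: it leaves `a` through its
parent iff `a` is not an ancestor of `b`, and through a child `c` iff `c` is an ancestor of `b`.
A unimodal request leaves through a parent and arrives from a parent, a diverging one leaves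
through a child. Hence `r` interferes on `r'` iff `s_r` and `t_{r'}` are unrelated, and `r'`
interferes on `r` iff `s_{r'}⁺` is an ancestor of `t_r`. What remains is order reasoning, using
that `m_r` is the greatest common ancestor of `s_r` and `t_r`.
-/

open Walk

namespace Request

variable {T : SimpleGraph V} (r : Request T)

lemma adj_sPlus : T.Adj r.s r.sPlus :=
  adj_snd (not_nil_iff_lt_length.mpr r.one_le_length)

lemma adj_tMinus : T.Adj r.tMinus r.t :=
  adj_penultimate (not_nil_iff_lt_length.mpr r.one_le_length)

end Request

section Diverging

variable {T : SimpleGraph V} {z : V} {r : Request T}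

lemma Diverging.ancestor_sPlus (hr : Diverging T z r) : Ancestor T z r.s r.sPlus := by
  simpa [Request.sPlus] using hr 0 r.one_le_length

lemma Diverging.tMinus_ancestor (hr : Diverging T z r) : Ancestor T z r.tMinus r.t := by
  have := hr (r.toWalk.length - 1) (by have := r.one_le_length; omega)
  rwa [Nat.sub_add_cancel r.one_le_length, getVert_length] at this

end Diverging

section Tree

variable {T : SimpleGraph V} (hT : T.IsTree)
include hT

noncomputable def treePath (x y : V) : T.Walk x y :=
  (hT.existsUnique_path x y).exists.choose

lemma treePath_isPath (x y : V) : (treePath hT x y).IsPath :=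
  (hT.existsUnique_path x y).exists.choose_spec

lemma eq_treePath {x y : V} {p : T.Walk x y} (hp : p.IsPath) : p = treePath hT x y :=
  (hT.existsUnique_path x y).unique hp (treePath_isPath hT x y)

variable {z : V}

lemma ancestor_iff_mem_support_treePath {x y : V} :
    Ancestor T z x y ↔ x ∈ (treePath hT z y).support := by
  constructor
  · rintro ⟨p, hp, hx⟩
    rwa [eq_treePath hT hp] at hx
  · exact fun hx => ⟨_, treePath_isPath hT z y, hx⟩

lemma ancestor_refl (x : V) : Ancestor T z x x :=
  ⟨_, treePath_isPath hT z x, end_mem_support _⟩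

lemma treePath_eq_append {a b : V} (hab : Ancestor T z a b) {p : T.Walk a b} (hp : p.IsPath) :
    treePath hT z b = (treePath hT z a).append p := by
  classical
  rw [ancestor_iff_mem_support_treePath hT] at hab
  have hzb := treePath_isPath hT z b
  calc treePath hT z b
      = ((treePath hT z b).takeUntil a hab).append ((treePath hT z b).dropUntil a hab) :=
        (take_spec _ hab).symm
    _ = (treePath hT z a).append p := by
        rw [eq_treePath hT (hzb.takeUntil hab), (hT.existsUnique_path a b).unique
          (hzb.dropUntil hab) hp]

lemma ancestor_trans {x y w : V} (hxy : Ancestor T z x y) (hyw : Ancestor T z y w) :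
    Ancestor T z x w := by
  rw [ancestor_iff_mem_support_treePath hT] at hxy ⊢
  rw [treePath_eq_append hT hyw (treePath_isPath hT y w), mem_support_append_iff]
  exact Or.inl hxy

lemma ancestor_antisymm {x y : V} (hxy : Ancestor T z x y) (hyx : Ancestor T z y x) : x = y := by
  have hy := congrArg length (treePath_eq_append hT hxy (treePath_isPath hT x y))
  have hx := congrArg length (treePath_eq_append hT hyx (treePath_isPath hT y x))
  rw [length_append] at hx hy
  exact eq_of_length_eq_zero (p := treePath hT x y) (by omega)

lemma mem_support_iff_ancestor {a b y : V} (hab : Ancestor T z a b) {p : T.Walk a b}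
    (hp : p.IsPath) : y ∈ p.support ↔ Ancestor T z a y ∧ Ancestor T z y b := by
  classical
  have hzb := treePath_eq_append hT hab hp
  constructor
  · intro hy
    refine ⟨⟨(treePath hT z a).append (p.takeUntil y hy), ?_, ?_⟩, ?_⟩
    · apply IsPath.of_append_left (q := p.dropUntil y hy)
      rw [← append_assoc, take_spec, ← hzb]
      exact treePath_isPath hT z b
    · exact (mem_support_append_iff _ _).2 (Or.inl (end_mem_support _))
    · rw [ancestor_iff_mem_support_treePath hT, hzb, mem_support_append_iff]
      exact Or.inr hy
  · rintro ⟨hay, hyb⟩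
    rw [ancestor_iff_mem_support_treePath hT, hzb, mem_support_append_iff] at hyb
    rcases hyb with hy | hy
    · rw [ancestor_antisymm hT ((ancestor_iff_mem_support_treePath hT).2 hy) hay]
      exact start_mem_support p
    · exact hy

lemma related_of_ancestor_of_ancestor {x y w : V} (hx : Ancestor T z x w)
    (hy : Ancestor T z y w) : Related T z x y := by
  rw [ancestor_iff_mem_support_treePath hT, treePath_eq_append hT hy (treePath_isPath hT y w),
    mem_support_append_iff] at hx
  rcases hx with hx | hx
  · exact Or.inl ((ancestor_iff_mem_support_treePath hT).2 hx)
  · exact Or.inr ((mem_support_iff_ancestor hT hy (treePath_isPath hT y w)).1 hx).1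

lemma exists_ancestor_of_related {x y : V} (h : Related T z x y) :
    ∃ w, Ancestor T z x w ∧ Ancestor T z y w := by
  rcases h with h | h
  · exact ⟨y, h, ancestor_refl hT y⟩
  · exact ⟨x, ancestor_refl hT x, h⟩

lemma related_of_adj {x y : V} (h : T.Adj x y) : Related T z x y := by
  by_cases hx : x ∈ (treePath hT z y).support
  · exact Or.inl ((ancestor_iff_mem_support_treePath hT).2 hx)
  · refine Or.inr ⟨_, (treePath_isPath hT z y).concat hx h.symm, ?_⟩
    rw [support_concat]
    exact List.mem_append_left _ (end_mem_support _)

lemma eq_or_eq_of_ancestor_of_adj {a c y : V} (h : T.Adj a c) (hac : Ancestor T z a c)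
    (hay : Ancestor T z a y) (hyc : Ancestor T z y c) : y = a ∨ y = c := by
  simpa using (mem_support_iff_ancestor hT hac (IsPath.of_adj h)).2 ⟨hay, hyc⟩

lemma eq_of_adj_ancestor {u v x : V} (hu : T.Adj u x) (hv : T.Adj v x)
    (hux : Ancestor T z u x) (hvx : Ancestor T z v x) : u = v := by
  rcases related_of_ancestor_of_ancestor hT hux hvx with h | h
  · exact ((eq_or_eq_of_ancestor_of_adj hT hu hux h hvx).resolve_right hv.ne).symm
  · exact (eq_or_eq_of_ancestor_of_adj hT hv hvx h hux).resolve_right hu.ne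

lemma eq_of_adj_descendant {a c c' w : V} (hc : T.Adj a c) (hc' : T.Adj a c')
    (hac : Ancestor T z a c) (hac' : Ancestor T z a c')
    (hcw : Ancestor T z c w) (hc'w : Ancestor T z c' w) : c = c' := by
  rcases related_of_ancestor_of_ancestor hT hcw hc'w with h | h
  · exact (eq_or_eq_of_ancestor_of_adj hT hc' hac' hac h).resolve_left hc.ne'
  · exact ((eq_or_eq_of_ancestor_of_adj hT hc hac hac' h).resolve_left hc'.ne').symm

/-- A path whose first step goes away from the root keeps doing so. -/
lemma ancestor_of_ancestor_snd {a b : V} {p : T.Walk a b} (hp : p.IsPath)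
    (h : Ancestor T z a p.snd) : Ancestor T z a b := by
  induction p with
  | nil => exact h
  | @cons a c b hac q ih =>
    rw [snd_cons] at h
    refine ancestor_trans hT h (ih hp.of_cons ?_)
    cases q with
    | nil => exact ancestor_refl hT c
    | @cons _ d _ hcd q' =>
      rw [snd_cons]
      refine (related_of_adj hT hcd).resolve_right fun hdc => ?_
      have had : a = d := eq_of_adj_ancestor hT hac hcd.symm h hdc
      exact ((cons_isPath_iff _ _).1 hp).2 (by simp [had])

lemma snd_ancestor_of_not_ancestor {a b : V} {p : T.Walk a b} (hp : p.IsPath)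
    (h : ¬ Ancestor T z a b) : Ancestor T z p.snd a := by
  have hne : a ≠ b := fun hab => h (hab ▸ ancestor_refl hT a)
  exact (related_of_adj hT (adj_snd (not_nil_of_ne hne))).resolve_left
    (mt (ancestor_of_ancestor_snd hT hp) h)

lemma ancestor_getVert_succ {a b : V} {p : T.Walk a b} (hp : p.IsPath)
    (hab : Ancestor T z a b) :
    ∀ i < p.length, Ancestor T z (p.getVert i) (p.getVert (i + 1)) := by
  induction p with
  | nil => simp
  | @cons a c b hac q ih =>
    have hc := (mem_support_iff_ancestor hT hab hp).1 (by simp : c ∈ (cons hac q).support)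
    rintro (_ | i) hi
    · simpa using hc.1
    · simpa using ih hp.of_cons hc.2 i (by simpa using hi)

lemma ancestor_of_mem_support {x a b y : V} {p : T.Walk a b} (hp : p.IsPath)
    (ha : Ancestor T z x a) (hb : Ancestor T z x b) (hy : y ∈ p.support) : Ancestor T z x y := by
  classical
  let q := (treePath hT x a).reverse.append (treePath hT x b)
  rw [(hT.existsUnique_path a b).unique hp (bypass_isPath q)] at hy
  rcases (mem_support_append_iff _ _).1 (support_bypass_subset_support q hy) with hy | hy
  · exact ((mem_support_iff_ancestor hT ha (treePath_isPath hT x a)).1 (by simpa using hy)).1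
  · exact ((mem_support_iff_ancestor hT hb (treePath_isPath hT x b)).1 hy).1

lemma treePath_snd_eq_iff_of_ancestor_adj {u a b : V} (hu : T.Adj u a)
    (hua : Ancestor T z u a) : (treePath hT a b).snd = u ↔ ¬ Ancestor T z a b := by
  have hp := treePath_isPath hT a b
  constructor
  · intro h hab
    have hau : Ancestor T z a (treePath hT a b).snd :=
      ((mem_support_iff_ancestor hT hab hp).1 (getVert_mem_support _ 1)).1
    rw [h] at hau
    exact hu.ne (ancestor_antisymm hT hua hau)
  · intro hab
    have hne : a ≠ b := fun h => hab (h ▸ ancestor_refl hT a)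
    exact eq_of_adj_ancestor hT (adj_snd (not_nil_of_ne hne)).symm hu
      (snd_ancestor_of_not_ancestor hT hp hab) hua

lemma treePath_snd_eq_iff_of_adj_ancestor {a c b : V} (hc : T.Adj a c)
    (hac : Ancestor T z a c) : (treePath hT a b).snd = c ↔ Ancestor T z c b := by
  have hp := treePath_isPath hT a b
  constructor
  · intro h
    have hab := ancestor_of_ancestor_snd hT hp (h ▸ hac)
    exact h ▸ ((mem_support_iff_ancestor hT hab hp).1 (getVert_mem_support _ 1)).2
  · intro hcb
    have hab := ancestor_trans hT hac hcb
    have hne : a ≠ b := fun h => hc.ne (ancestor_antisymm hT hac (h ▸ hcb))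
    have hsnd := (mem_support_iff_ancestor hT hab hp).1 (getVert_mem_support _ 1)
    exact eq_of_adj_descendant hT (adj_snd (not_nil_of_ne hne)) hc hsnd.1 hac hsnd.2 hcb

lemma diverging_iff_ancestor (r : Request T) : Diverging T z r ↔ Ancestor T z r.s r.t :=
  ⟨fun hr => ancestor_of_ancestor_snd hT r.isPath hr.ancestor_sPlus,
    ancestor_getVert_succ hT r.isPath⟩

lemma converging_of_ancestor {r : Request T} (h : Ancestor T z r.t r.s) : Converging T z r := by
  intro i hi
  have := ancestor_getVert_succ hT r.isPath.reverse h (r.toWalk.length - (i + 1))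
    (by rw [length_reverse]; omega)
  rw [getVert_reverse, getVert_reverse] at this
  convert this using 2 <;> omega

lemma Unimodal.sPlus_ancestor {r : Request T} (hr : Unimodal T z r) :
    Ancestor T z r.sPlus r.s :=
  snd_ancestor_of_not_ancestor hT r.isPath fun h => hr.2 ((diverging_iff_ancestor hT r).2 h)

lemma Unimodal.tMinus_ancestor {r : Request T} (hr : Unimodal T z r) :
    Ancestor T z r.tMinus r.t := by
  have := snd_ancestor_of_not_ancestor hT r.isPath.reverse
    fun h => hr.1 (converging_of_ancestor hT h)
  rwa [snd_reverse] at this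

lemma interferesOn_iff_treePath_snd (r r' : Request T) :
    InterferesOn T r r' ↔
      (treePath hT r.s r'.t).snd = r.sPlus ∧ (treePath hT r'.t r.s).snd = r'.tMinus := by
  constructor
  · rintro ⟨p, hp, -, h1, h2⟩
    rw [← eq_treePath hT hp, ← eq_treePath hT hp.reverse, snd_reverse]
    exact ⟨h1, h2⟩
  · rintro ⟨h1, h2⟩
    set p := treePath hT r.s r'.t
    refine ⟨p, treePath_isPath hT _ _, ?_, h1, ?_⟩
    · by_contra! hp
      have hst : r.s = r'.t := eq_of_length_eq_zero (p := p) (by omega)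
      have hsnd : p.snd = r'.t := p.getVert_of_length_le (by omega)
      exact r.adj_sPlus.ne (hst.trans (hsnd.symm.trans h1))
    · rw [← h2, ← eq_treePath hT (treePath_isPath hT r.s r'.t).reverse, snd_reverse]

lemma interferesOn_iff_not_related {r r' : Request T} (hr : Ancestor T z r.sPlus r.s)
    (hr' : Ancestor T z r'.tMinus r'.t) : InterferesOn T r r' ↔ ¬ Related T z r.s r'.t := by
  rw [interferesOn_iff_treePath_snd hT, treePath_snd_eq_iff_of_ancestor_adj hT r.adj_sPlus.symm hr,
    treePath_snd_eq_iff_of_ancestor_adj hT r'.adj_tMinus hr', Related, not_or]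

lemma interferesOn_iff_ancestor {r r' : Request T} (hr : Ancestor T z r.s r.sPlus)
    (hr' : Ancestor T z r'.tMinus r'.t) : InterferesOn T r r' ↔ Ancestor T z r.sPlus r'.t := by
  rw [interferesOn_iff_treePath_snd hT, treePath_snd_eq_iff_of_adj_ancestor hT r.adj_sPlus hr,
    treePath_snd_eq_iff_of_ancestor_adj hT r'.adj_tMinus hr', and_iff_left_iff_imp]
  exact fun h h' => r.adj_sPlus.ne (ancestor_antisymm hT hr (ancestor_trans hT h h'))

end Tree

/-- Lemma 1(vi): a unimodal request `r` and a diverging request `r'` do not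
interfere iff `m_r` is an ancestor of `s_{r'}` and `s_r` and `t_{r'}` are related. -/
theorem unimodal_div_not_interfere_iff {V : Type*} (T : SimpleGraph V) (hT : T.IsTree)
    (z : V) (r r' : Request T) (m : V)
    (hr : Unimodal T z r) (hr' : Diverging T z r')
    (hm : IsMiddle T z r m) :
    ¬ Interfere T r r' ↔ Ancestor T z m r'.s ∧ Related T z r.s r'.t := by
  have hm_s : Ancestor T z m r.s := hm.2 _ r.toWalk.start_mem_support
  have hm_t : Ancestor T z m r.t := hm.2 _ r.toWalk.end_mem_support
  have hs' := hr'.ancestor_sPlus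
  have hs't' := (diverging_iff_ancestor hT r').1 hr'
  rw [Interfere, interferesOn_iff_not_related hT (hr.sPlus_ancestor hT) hr'.tMinus_ancestor,
    interferesOn_iff_ancestor hT hs' (hr.tMinus_ancestor hT), not_or, not_not, and_comm]
  refine and_congr_left fun hrel => ?_
  obtain ⟨c, hsc, ht'c⟩ := exists_ancestor_of_related hT hrel
  have hwt' := ((mem_support_iff_ancestor hT hs't' r'.isPath).1 (getVert_mem_support _ 1)).2
  have hwc : Ancestor T z r'.sPlus c := ancestor_trans hT hwt' ht'c
  constructor
  · intro hnwt
    rcases related_of_ancestor_of_ancestor hT (ancestor_trans hT hm_s hsc)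
      (ancestor_trans hT hs't' ht'c) with hms' | hs'm
    · exact hms'
    rcases related_of_ancestor_of_ancestor hT (ancestor_trans hT hm_s hsc) hwc with hmw | hwm
    · rcases eq_or_eq_of_ancestor_of_adj hT r'.adj_sPlus hs' hs'm hmw with rfl | rfl
      · exact ancestor_refl hT _
      · exact absurd hm_t hnwt
    · exact absurd (ancestor_trans hT hwm hm_t) hnwt
  · intro hms' hwt
    rcases related_of_ancestor_of_ancestor hT hwc hsc with hws | hsw
    · have hwm := ancestor_of_mem_support hT r.isPath hws hwt hm.1
      exact r'.adj_sPlus.ne (ancestor_antisymm hT hs' (ancestor_trans hT hwm hms'))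
    · exact hr.2 ((diverging_iff_ancestor hT r).2 (ancestor_trans hT hsw hwt))
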